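/- Under Assumption 1, for all s ∈ X_c^0 and u ∈ U_c, Out ∈ δ_c(s,u) if and only if there exists σ ∈ Σ such that π_{I_σ^c}(Φ_σ(s_{I_σ},u_{J_σ})) is not a subset of 𝒳_{I_σ^c}. -/

import Mathlib

open Set Function

/-- `ℝⁿ` modeled as `Fin n → ℝ`. -/
abbrev Vec (n : ℕ) : Type := Fin n → ℝ

/-- Projection `π_{I'}` of a dependent tuple onto the components with indices in `I'`. -/
def proj {ι : Type*} (E : ι → Type*) (I' : Set ι) (x : (i : ι) → E i) : (i : I') → E i.1 :=
  fun i => x i.1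

/-- `P` is a finite partition of `A`: finitely many nonempty pairwise disjoint cells covering `A`. -/
def IsFinPartition {α : Type*} (P : Set (Set α)) (A : Set α) : Prop :=
  P.Finite ∧ (∀ s ∈ P, s.Nonempty) ∧ ⋃₀ P = A ∧
    ∀ s ∈ P, ∀ t ∈ P, s ≠ t → Disjoint s t

/-- The family `A : τ → Set α` is a partition of the index type `α`. -/
def IsIndexPartition {τ α : Type*} (A : τ → Set α) : Prop :=
  (⋃ σ, A σ) = Set.univ ∧ Pairwise (Disjoint on A)

/-- The set `𝒫` of cells `s₁ × ⋯ × s_n̄`, `s_i ∈ 𝒫_i`, of the product partition. -/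
def cells {ι : Type*} {E : ι → Type*} (P : (i : ι) → Set (Set (E i))) :
    Set (Set ((i : ι) → E i)) :=
  { s | ∃ f : (i : ι) → Set (E i), (∀ i, f i ∈ P i) ∧ s = Set.pi Set.univ f }

/-- The set `X_σ⁰` of cells `∏_{i ∈ I'} s_i`, `s_i ∈ 𝒫_i`, of the partition restricted to `I'`. -/
def cellsOn {ι : Type*} {E : ι → Type*} (P : (i : ι) → Set (Set (E i))) (I' : Set ι) :
    Set (Set ((i : I') → E i.1)) :=
  { s | ∃ f : (i : ι) → Set (E i), (∀ i, f i ∈ P i) ∧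
        s = Set.pi Set.univ (fun i : I' => f i.1) }

/-- `F(𝒳',𝒰') = ⋃_{x ∈ 𝒳', u ∈ 𝒰'} F(x,u)`. -/
def Fset {X U : Type*} (F : X → U → Set X) (A : Set X) (B : Set U) : Set X :=
  ⋃ x ∈ A, ⋃ u ∈ B, F x u

/-- `Φ_σ(s_σ,u_σ) = F̄(𝒳 ∩ π_{I_σ}⁻¹(s_σ), 𝒰 ∩ π_{J_σ}⁻¹({u_σ}))`. -/
def Phi {ι κ : Type*} (E : ι → Type*) (Fu : κ → Type*)
    (Fbar : Set ((i : ι) → E i) → Set ((j : κ) → Fu j) → Set ((i : ι) → E i))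
    (Xset : Set ((i : ι) → E i)) (Uset : Set ((j : κ) → Fu j))
    (Iσ : Set ι) (Jσ : Set κ)
    (sσ : Set ((i : Iσ) → E i.1)) (uσ : (j : Jσ) → Fu j.1) : Set ((i : ι) → E i) :=
  Fbar (Xset ∩ proj E Iσ ⁻¹' sσ) (Uset ∩ proj Fu Jσ ⁻¹' {uσ})

/-- `Out_σ = π_{I_σ}(ℝⁿ) \ 𝒳_{I_σ}`. -/
def OutOf {ι : Type*} (E : ι → Type*) (Iσ : Set ι) (Xset : Set ((i : ι) → E i)) :
    Set ((i : Iσ) → E i.1) :=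
  proj E Iσ '' Set.univ \ proj E Iσ '' Xset

/-- Transition map `δ_σ` of the symbolic subsystem `S_σ`. -/
def deltaSub {ι κ : Type*} (E : ι → Type*) (Fu : κ → Type*)
    (Fbar : Set ((i : ι) → E i) → Set ((j : κ) → Fu j) → Set ((i : ι) → E i))
    (Xset : Set ((i : ι) → E i)) (Uset : Set ((j : κ) → Fu j))
    (P : (i : ι) → Set (Set (E i))) (V : (j : κ) → Set (Fu j))
    (Iσ Icσ : Set ι) (Jσ : Set κ)
    (sσ : Set ((i : Iσ) → E i.1)) (uσ : (j : Jσ) → Fu j.1) :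
    Set (Set ((i : Iσ) → E i.1)) :=
  { s' | sσ ∈ cellsOn P Iσ ∧ uσ ∈ Set.pi Set.univ (fun j : Jσ => V j.1) ∧
      ((s' ∈ cellsOn P Iσ ∧
          (s' ∩ proj E Iσ '' Phi E Fu Fbar Xset Uset Iσ Jσ sσ uσ).Nonempty) ∨
        (s' = OutOf E Iσ Xset ∧
          (proj E Iσ '' Phi E Fu Fbar Xset Uset Iσ Jσ sσ uσ ∩ proj E Iσ '' Xset = ∅ ∨
            ¬proj E Icσ '' Phi E Fu Fbar Xset Uset Iσ Jσ sσ uσ ⊆ proj E Icσ '' Xset))) }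

/-- Transition map `δ_c` of the composed abstraction `S_c`. -/
def deltaC {ι κ τ : Type*} (E : ι → Type*) (Fu : κ → Type*)
    (Fbar : Set ((i : ι) → E i) → Set ((j : κ) → Fu j) → Set ((i : ι) → E i))
    (Xset : Set ((i : ι) → E i)) (Uset : Set ((j : κ) → Fu j))
    (P : (i : ι) → Set (Set (E i))) (V : (j : κ) → Set (Fu j))
    (Im Ic : τ → Set ι) (Jm : τ → Set κ)
    (s : Set ((i : ι) → E i)) (u : (j : κ) → Fu j) :
    Set (Set ((i : ι) → E i)) :=
  { s' | s ∈ cells P ∧ u ∈ Set.pi Set.univ V ∧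
      ((s' ∈ cells P ∧ ∀ σ : τ,
          proj E (Im σ) '' s' ∈
            deltaSub E Fu Fbar Xset Uset P V (Im σ) (Ic σ) (Jm σ)
              (proj E (Im σ) '' s) (proj Fu (Jm σ) u)) ∨
        (s' = Xsetᶜ ∧ ∃ σ : τ,
          OutOf E (Im σ) Xset ∈
            deltaSub E Fu Fbar Xset Uset P V (Im σ) (Ic σ) (Jm σ)
              (proj E (Im σ) '' s) (proj Fu (Jm σ) u))) }

/-- Safety controller for the transition map `δ` and the safe set `safe`. -/
def IsSafetyController {X U : Type*} (δ : X → U → Set X) (safe : Set X) (C : X → Set U) : Prop :=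
  (∀ x, ∀ u ∈ C x, (δ x u).Nonempty) ∧
  (∀ x, (C x).Nonempty → x ∈ safe) ∧
  (∀ x, ∀ u ∈ C x, ∀ x', x' ∈ δ x u → (C x').Nonempty)

/-- Maximal safety controller. -/
def IsMaximalSafetyController {X U : Type*} (δ : X → U → Set X) (safe : Set X)
    (Cstar : X → Set U) : Prop :=
  IsSafetyController δ safe Cstar ∧
    ∀ C, IsSafetyController δ safe C → ∀ x, C x ⊆ Cstar x

/-- Feedback refinement relation (over a common input type). -/
def IsFeedbackRefinement {Xa Xb U : Type*} (δa : Xa → U → Set Xa) (δb : Xb → U → Set Xb)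
    (H : Xa → Xb) : Prop :=
  ∀ xa : Xa,
    (∀ u, (δb (H xa) u).Nonempty → (δa xa u).Nonempty) ∧
    (∀ u, (δb (H xa) u).Nonempty → H '' δa xa u ⊆ δb (H xa) u)

/-- Concrete transition map of `S = (ℝⁿ, 𝒰, F)` (inputs restricted to `𝒰`). -/
def deltaConc {X U : Type*} (F : X → U → Set X) (Uset : Set U) (x : X) (u : U) : Set X :=
  { x' | u ∈ Uset ∧ x' ∈ F x u }

/-! The cell `s` contains a state `x`, which has an `F`-successor `z` under `u`; this single
point `z` lies in every `Φ_σ(s_{I_σ}, u_{J_σ})`. So if a subsystem leaves `𝒳` through the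
condition `π_{I_σ}(Φ_σ) ∩ 𝒳_{I_σ} = ∅`, then `z ∉ 𝒳`, some coordinate `z_i` leaves `𝒳_i`, and
the subsystem `σ'` with `i ∈ I_{σ'}^c` sees this as `π_{I_{σ'}^c}(Φ_{σ'}) ⊄ 𝒳_{I_{σ'}^c}`.
The other alternatives are void: cells are nonempty subsets of `𝒳`, so neither `Out` nor
`Out_σ` is ever a cell. -/

theorem proj_image_pi {ι : Type*} {E : ι → Type*} (I : Set ι) {A : (i : ι) → Set (E i)}
    (hA : ∀ i, (A i).Nonempty) :
    proj E I '' pi univ A = pi univ fun i : I => A i.1 := by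
  classical
  ext y
  constructor
  · rintro ⟨x, hx, rfl⟩ i _
    exact hx i.1 trivial
  · intro hy
    choose a ha using hA
    refine ⟨fun i => if h : i ∈ I then y ⟨i, h⟩ else a i, fun i _ => ?_, ?_⟩
    · by_cases h : i ∈ I
      · simpa [h] using hy ⟨i, h⟩ trivial
      · simpa [h] using ha i
    · funext i
      simp [proj, i.2]

theorem exists_proj_notMem_image_pi {ι τ : Type*} {E : ι → Type*} {I : τ → Set ι}
    (hI : ⋃ σ, I σ = univ) {A : (i : ι) → Set (E i)} {z : (i : ι) → E i}
    (hz : z ∉ pi univ A) : ∃ σ, proj E (I σ) z ∉ proj E (I σ) '' pi univ A := by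
  obtain ⟨i, hi⟩ : ∃ i, z i ∉ A i := by simpa [mem_univ_pi] using hz
  obtain ⟨σ, hiσ⟩ := mem_iUnion.mp (hI ▸ mem_univ i)
  refine ⟨σ, fun ⟨x, hx, hxz⟩ => hi ?_⟩
  have hxi : x i = z i := congrFun hxz ⟨i, hiσ⟩
  exact hxi ▸ hx i trivial

theorem mem_Phi_of_mem {ι κ : Type*} {E : ι → Type*} {Fu : κ → Type*}
    {F : ((i : ι) → E i) → ((j : κ) → Fu j) → Set ((i : ι) → E i)}
    {Fbar : Set ((i : ι) → E i) → Set ((j : κ) → Fu j) → Set ((i : ι) → E i)}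
    (hFbar : ∀ A B, Fset F A B ⊆ Fbar A B) {Xset : Set ((i : ι) → E i)}
    {Uset : Set ((j : κ) → Fu j)} (I : Set ι) (J : Set κ) {s : Set ((i : ι) → E i)}
    {x z : (i : ι) → E i} {u : (j : κ) → Fu j} (hxX : x ∈ Xset) (hxs : x ∈ s) (hu : u ∈ Uset)
    (hz : z ∈ F x u) :
    z ∈ Phi E Fu Fbar Xset Uset I J (proj E I '' s) (proj Fu J u) :=
  hFbar _ _ <| mem_biUnion ⟨hxX, mem_image_of_mem _ hxs⟩ (mem_biUnion ⟨hu, rfl⟩ hz)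

theorem IsFinPartition.nonempty_of_mem {α : Type*} {P : Set (Set α)} {A s : Set α}
    (hP : IsFinPartition P A) (hs : s ∈ P) : s.Nonempty :=
  hP.2.1 s hs

theorem IsFinPartition.subset_of_mem {α : Type*} {P : Set (Set α)} {A s : Set α}
    (hP : IsFinPartition P A) (hs : s ∈ P) : s ⊆ A :=
  hP.2.2.1 ▸ subset_sUnion_of_mem hs

section Cells

variable {ι : Type*} {E : ι → Type*} {P : (i : ι) → Set (Set (E i))} {A : (i : ι) → Set (E i)}

theorem nonempty_of_mem_cells (hP : ∀ i, IsFinPartition (P i) (A i))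
    {s : Set ((i : ι) → E i)} (hs : s ∈ cells P) : s.Nonempty := by
  obtain ⟨f, hf, rfl⟩ := hs
  exact univ_pi_nonempty_iff.mpr fun i => (hP i).nonempty_of_mem (hf i)

theorem subset_of_mem_cells (hP : ∀ i, IsFinPartition (P i) (A i))
    {s : Set ((i : ι) → E i)} (hs : s ∈ cells P) : s ⊆ pi univ A := by
  obtain ⟨f, hf, rfl⟩ := hs
  exact pi_mono fun i _ => (hP i).subset_of_mem (hf i)

theorem compl_pi_notMem_cells (hP : ∀ i, IsFinPartition (P i) (A i)) :
    (pi univ A)ᶜ ∉ cells P := fun h => by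
  obtain ⟨x, hx⟩ := nonempty_of_mem_cells hP h
  exact hx (subset_of_mem_cells hP h hx)

theorem proj_image_mem_cellsOn (hP : ∀ i, IsFinPartition (P i) (A i)) (I : Set ι)
    {s : Set ((i : ι) → E i)} (hs : s ∈ cells P) : proj E I '' s ∈ cellsOn P I := by
  obtain ⟨f, hf, rfl⟩ := hs
  exact ⟨f, hf, proj_image_pi I fun i => (hP i).nonempty_of_mem (hf i)⟩

theorem outOf_notMem_cellsOn (hP : ∀ i, IsFinPartition (P i) (A i)) (I : Set ι) :
    OutOf E I (pi univ A) ∉ cellsOn P I := by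
  rintro ⟨f, hf, hOut⟩
  have hfne : ∀ i, (f i).Nonempty := fun i => (hP i).nonempty_of_mem (hf i)
  rw [← proj_image_pi I hfne] at hOut
  obtain ⟨y, hy⟩ := (univ_pi_nonempty_iff.mpr hfne).image (proj E I)
  have hyA : y ∈ proj E I '' pi univ A :=
    image_mono (pi_mono fun i _ => (hP i).subset_of_mem (hf i)) hy
  exact (hOut ▸ hy : y ∈ OutOf E I (pi univ A)).2 hyA

end Cells

theorem stmt2_general
    {ι κ τ : Type*}
    (nd : ι → ℕ) (pd : κ → ℕ)
    (𝒳i : (i : ι) → Set (Vec (nd i))) (𝒰j : (j : κ) → Set (Vec (pd j)))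
    (F : ((i : ι) → Vec (nd i)) → ((j : κ) → Vec (pd j)) → Set ((i : ι) → Vec (nd i)))
    (Fbar : Set ((i : ι) → Vec (nd i)) → Set ((j : κ) → Vec (pd j)) →
      Set ((i : ι) → Vec (nd i)))
    (P : (i : ι) → Set (Set (Vec (nd i)))) (V : (j : κ) → Set (Vec (pd j)))
    (Im Ic : τ → Set ι) (Jm : τ → Set κ)
    (hF : ∀ x u, u ∈ Set.pi Set.univ 𝒰j → (F x u).Nonempty)
    (hFbar : ∀ A B, Fset F A B ⊆ Fbar A B)
    (hP : ∀ i, IsFinPartition (P i) (𝒳i i))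
    (hV : ∀ j, (V j).Finite ∧ V j ⊆ 𝒰j j)
    (hIc : IsIndexPartition Ic) :
    ∀ s ∈ cells P, ∀ u ∈ Set.pi Set.univ V,
      ((Set.pi Set.univ 𝒳i)ᶜ ∈ deltaC (fun i => Vec (nd i)) (fun j => Vec (pd j)) Fbar (Set.pi Set.univ 𝒳i) (Set.pi Set.univ 𝒰j) P V Im Ic Jm s u ↔
        ∃ σ, ¬proj (fun i => Vec (nd i)) (Ic σ) ''
            Phi (fun i => Vec (nd i)) (fun j => Vec (pd j)) Fbar (Set.pi Set.univ 𝒳i) (Set.pi Set.univ 𝒰j) (Im σ) (Jm σ) (proj (fun i => Vec (nd i)) (Im σ) '' s) (proj (fun j => Vec (pd j)) (Jm σ) u) ⊆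
          proj (fun i => Vec (nd i)) (Ic σ) '' (Set.pi Set.univ 𝒳i)) := by
  rintro s hs u hu
  have huU : u ∈ pi univ 𝒰j := fun j _ => (hV j).2 (hu j trivial)
  constructor
  · rintro ⟨-, -, ⟨hcell, -⟩ | ⟨-, σ, -, -, ⟨hcell, -⟩ | ⟨-, hdisj | hns⟩⟩⟩
    · exact absurd hcell (compl_pi_notMem_cells hP)
    · exact absurd hcell (outOf_notMem_cellsOn hP _)
    · obtain ⟨x, hxs⟩ := nonempty_of_mem_cells hP hs
      obtain ⟨z, hz⟩ := hF x u huU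
      have hzPhi := fun σ =>
        mem_Phi_of_mem hFbar (Im σ) (Jm σ) (subset_of_mem_cells hP hs hxs) hxs huU hz
      have hzX : z ∉ pi univ 𝒳i := fun hzX =>
        hdisj.subset ⟨mem_image_of_mem _ (hzPhi σ), mem_image_of_mem _ hzX⟩
      obtain ⟨σ', hσ'⟩ := exists_proj_notMem_image_pi hIc.1 hzX
      exact ⟨σ', fun hsub => hσ' (hsub (mem_image_of_mem _ (hzPhi σ')))⟩
    · exact ⟨σ, hns⟩
  · rintro ⟨σ, hns⟩
    exact ⟨hs, hu, Or.inr ⟨rfl, σ, proj_image_mem_cellsOn hP _ hs, fun j _ => hu j.1 trivial,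
      Or.inr ⟨rfl, Or.inr hns⟩⟩⟩

theorem stmt2
    {ι κ τ : Type*} [Finite ι] [Finite κ] [Finite τ]
    (nd : ι → ℕ) (pd : κ → ℕ)
    (𝒳i : (i : ι) → Set (Vec (nd i))) (𝒰j : (j : κ) → Set (Vec (pd j)))
    (F : ((i : ι) → Vec (nd i)) → ((j : κ) → Vec (pd j)) → Set ((i : ι) → Vec (nd i)))
    (Fbar : Set ((i : ι) → Vec (nd i)) → Set ((j : κ) → Vec (pd j)) →
      Set ((i : ι) → Vec (nd i)))
    (P : (i : ι) → Set (Set (Vec (nd i)))) (V : (j : κ) → Set (Vec (pd j)))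
    (Im Ic : τ → Set ι) (Jm : τ → Set κ)
    (hF : ∀ x u, u ∈ Set.pi Set.univ 𝒰j → (F x u).Nonempty)
    (hFbar : ∀ A B, Fset F A B ⊆ Fbar A B)
    (hP : ∀ i, IsFinPartition (P i) (𝒳i i))
    (hV : ∀ j, (V j).Finite ∧ V j ⊆ 𝒰j j)
    (hIc : IsIndexPartition Ic) (hIcne : ∀ σ, (Ic σ).Nonempty) (hIcIm : ∀ σ, Ic σ ⊆ Im σ)
    (hJ : IsIndexPartition Jm) (hJne : ∀ σ, (Jm σ).Nonempty) :
    ∀ s ∈ cells P, ∀ u ∈ Set.pi Set.univ V,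
      ((Set.pi Set.univ 𝒳i)ᶜ ∈ deltaC (fun i => Vec (nd i)) (fun j => Vec (pd j)) Fbar (Set.pi Set.univ 𝒳i) (Set.pi Set.univ 𝒰j) P V Im Ic Jm s u ↔
        ∃ σ, ¬proj (fun i => Vec (nd i)) (Ic σ) ''
            Phi (fun i => Vec (nd i)) (fun j => Vec (pd j)) Fbar (Set.pi Set.univ 𝒳i) (Set.pi Set.univ 𝒰j) (Im σ) (Jm σ) (proj (fun i => Vec (nd i)) (Im σ) '' s) (proj (fun j => Vec (pd j)) (Jm σ) u) ⊆
          proj (fun i => Vec (nd i)) (Ic σ) '' (Set.pi Set.univ 𝒳i)) :=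
  stmt2_general nd pd 𝒳i 𝒰j F Fbar P V Im Ic Jm hF hFbar hP hV hIc
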